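/- arXiv:2110.01878 — 2 statements merged into one kernel-verified Lean document; each statement's English description precedes it below -/
import Mathlib

section
/- For any partition λ of t into parts of size at most r = m/2 (m even) with ℓ parts, and any n ≥ ℓ, the number of vectors x ∈ Z_m^n with weight decomposition λ is 2^{ℓ - c} · |Π_λ| · C(n, ℓ), where c is the number of parts of λ equal to r. -/
/-- Lee weight of an element of `ZMod m`. -/
def leeWt (m : ℕ) (a : ZMod m) : ℕ := min a.val (m - a.val)

/-- The multiset of Lee weights of the nonzero entries of a vector. -/
def leeDecomp (m n : ℕ) (x : Fin n → ZMod m) : Multiset ℕ :=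
  (Finset.univ.filter fun i => x i ≠ 0).val.map fun i => leeWt m (x i)

open Finset

section aux

noncomputable def mnom (M : Multiset ℕ) : ℕ := (Multiset.toFinsupp M).multinomial

lemma mult_eq (M : Multiset ℕ) : mnom M = Nat.multinomial M.toFinset M.count := by
  rw [mnom, Finsupp.multinomial_eq, Multiset.toFinsupp_support]
  exact Nat.multinomial_congr fun a _ => Multiset.toFinsupp_apply M a

lemma mult_spec (M : Multiset ℕ) :
    (∏ i ∈ M.toFinset, (M.count i).factorial) * mnom M = (Multiset.card M).factorial := by
  rw [mult_eq, ← Multiset.toFinset_sum_count_eq M]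
  exact Nat.multinomial_spec _ _

lemma erase_mult (M : Multiset ℕ) (b : ℕ) (hb : b ∈ M) :
    mnom (M.erase b) * Multiset.card M = mnom M * M.count b := by
  classical
  set P' : ℕ := ∏ i ∈ (M.erase b).toFinset, ((M.erase b).count i).factorial with hP'
  have hbt : b ∈ M.toFinset := Multiset.mem_toFinset.2 hb
  have hcb : 0 < M.count b := Multiset.count_pos.2 hb
  have hcard : 0 < Multiset.card M := Multiset.card_pos.2 (by rintro rfl; simp at hb)
  have c1 : P' = ∏ i ∈ M.toFinset, ((M.erase b).count i).factorial := by
    refine Finset.prod_subset (fun i hi => ?_) (fun i _ hi => ?_)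
    · exact Multiset.mem_toFinset.2 (Multiset.mem_of_mem_erase (Multiset.mem_toFinset.1 hi))
    · rw [Multiset.count_eq_zero.2 (fun h => hi (Multiset.mem_toFinset.2 h))]; rfl
  have c2 : P' * M.count b = ∏ i ∈ M.toFinset, (M.count i).factorial := by
    rw [c1, ← Finset.mul_prod_erase _ _ hbt,
      ← Finset.mul_prod_erase _ (fun i => (M.count i).factorial) hbt]
    have : ∏ i ∈ M.toFinset.erase b, ((M.erase b).count i).factorial
        = ∏ i ∈ M.toFinset.erase b, (M.count i).factorial := by
      refine Finset.prod_congr rfl fun i hi => ?_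
      rw [Multiset.count_erase_of_ne (Finset.ne_of_mem_erase hi)]
    rw [this, Multiset.count_erase_self]
    rw [mul_comm, ← mul_assoc, Nat.mul_factorial_pred hcb.ne']
  have hP'pos : 0 < P' := Finset.prod_pos fun i _ => Nat.factorial_pos _
  have spec' : P' * mnom (M.erase b) = (Multiset.card M - 1).factorial := by
    rw [hP', mult_spec, Multiset.card_erase_of_mem hb]; rfl
  refine Nat.eq_of_mul_eq_mul_left hP'pos ?_
  calc P' * (mnom (M.erase b) * Multiset.card M)
      = (P' * mnom (M.erase b)) * Multiset.card M := by ring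
    _ = (Multiset.card M - 1).factorial * Multiset.card M := by rw [spec']
    _ = (Multiset.card M).factorial := by
        rw [mul_comm]; exact Nat.mul_factorial_pred hcard.ne'
    _ = (∏ i ∈ M.toFinset, (M.count i).factorial) * mnom M := (mult_spec M).symm
    _ = (P' * M.count b) * mnom M := by rw [c2]
    _ = P' * (mnom M * M.count b) := by ring

lemma sum_erase_mult (M : Multiset ℕ) (hM : M ≠ 0) :
    ∑ b ∈ M.toFinset, mnom (M.erase b) = mnom M := by
  have hcard : 0 < Multiset.card M := Multiset.card_pos.2 hM
  refine Nat.eq_of_mul_eq_mul_right hcard ?_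
  rw [Finset.sum_mul]
  calc ∑ b ∈ M.toFinset, mnom (M.erase b) * Multiset.card M
      = ∑ b ∈ M.toFinset, mnom M * M.count b :=
        Finset.sum_congr rfl fun b hb => erase_mult M b (Multiset.mem_toFinset.1 hb)
    _ = mnom M * ∑ b ∈ M.toFinset, M.count b := by rw [Finset.mul_sum]
    _ = mnom M * Multiset.card M := by rw [Multiset.toFinset_sum_count_eq]

lemma card_fiber (m w : ℕ) [NeZero m] (heven : Even m) (hw1 : 1 ≤ w) (hwr : w ≤ m / 2) :
    (Finset.univ.filter fun a : ZMod m => a ≠ 0 ∧ leeWt m a = w).card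
      = if w = m / 2 then 1 else 2 := by
  have hm0 : 0 < m := Nat.pos_of_ne_zero (NeZero.ne m)
  have h2 : m / 2 * 2 = m := Nat.div_mul_cancel heven.two_dvd
  have hwm : w < m := by omega
  have hmw : m - w < m := by omega
  have hvw : ((w : ℕ) : ZMod m).val = w := ZMod.val_cast_of_lt hwm
  have hvmw : (((m - w : ℕ)) : ZMod m).val = m - w := ZMod.val_cast_of_lt hmw
  have key : ∀ a : ZMod m, (a ≠ 0 ∧ leeWt m a = w) ↔
      (a = (w : ℕ) ∨ a = ((m - w : ℕ) : ZMod m)) := by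
    intro a
    have hval : a.val < m := ZMod.val_lt a
    have hcast : ((a.val : ℕ) : ZMod m) = a := ZMod.natCast_rightInverse a
    constructor
    · rintro ⟨h0, hw⟩
      have hv0 : a.val ≠ 0 := fun h => h0 ((ZMod.val_eq_zero a).1 h)
      unfold leeWt at hw
      rcases le_total a.val (m - a.val) with h | h
      · left; rw [← hcast]; congr 1; omega
      · right; rw [← hcast]; congr 1; omega
    · rintro (rfl | rfl)
      · constructor
        · intro h; rw [h, ZMod.val_zero] at hvw; omega
        · unfold leeWt; rw [hvw]; omega
      · constructor
        · intro h; rw [h, ZMod.val_zero] at hvmw; omega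
        · unfold leeWt; rw [hvmw]; omega
  classical
  have hset : (Finset.univ.filter fun a : ZMod m => a ≠ 0 ∧ leeWt m a = w)
      = Finset.univ.filter fun a : ZMod m => a = (w : ℕ) ∨ a = ((m - w : ℕ) : ZMod m) := by
    apply Finset.filter_congr; intro a _; exact key a
  rw [hset, Finset.filter_or, Finset.filter_eq', Finset.filter_eq']
  simp only [Finset.mem_univ, if_true]
  by_cases hw : w = m / 2
  · have hmm : m - w = w := by omega
    rw [hmm, if_pos hw, Finset.union_self, Finset.card_singleton]
  · have hne : ((w : ℕ) : ZMod m) ≠ ((m - w : ℕ) : ZMod m) := by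
      intro h; rw [h] at hvw; omega
    rw [if_neg hw]
    have : ({(w : ZMod m)} : Finset (ZMod m)) ∪ {((m - w : ℕ) : ZMod m)}
        = {(w : ZMod m), ((m - w : ℕ) : ZMod m)} := by
      ext a; simp [or_comm]
    rw [this, Finset.card_pair hne]

def leeD (m : ℕ) (s : Multiset (ZMod m)) : Multiset ℕ :=
  (s.filter (· ≠ 0)).map (leeWt m)

lemma leeDecomp_eq (m n : ℕ) (x : Fin n → ZMod m) :
    leeDecomp m n x = leeD m (Finset.univ.val.map x) := by
  unfold leeDecomp leeD
  rw [Multiset.filter_map, Multiset.map_map, Finset.filter_val]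
  rfl

lemma leeD_cons (m : ℕ) (a : ZMod m) (s : Multiset (ZMod m)) :
    leeD m (a ::ₘ s) = if a = 0 then leeD m s else leeWt m a ::ₘ leeD m s := by
  unfold leeD
  rw [Multiset.filter_cons]
  by_cases h : a = 0 <;> simp [h]

lemma leeDecomp_succ (m n : ℕ) (x : Fin (n + 1) → ZMod m) :
    leeDecomp m (n + 1) x =
      if x 0 = 0 then leeDecomp m n (Fin.tail x)
      else leeWt m (x 0) ::ₘ leeDecomp m n (Fin.tail x) := by
  rw [leeDecomp_eq, leeDecomp_eq]
  have h : (Finset.univ.val.map x : Multiset (ZMod m))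
      = x 0 ::ₘ Finset.univ.val.map (Fin.tail x) := by
    rw [Fin.univ_succ, Finset.cons_val, Multiset.map_cons, Finset.map_val, Multiset.map_map]
    rfl
  rw [h, leeD_cons]

lemma leeDecomp_zero (m : ℕ) (x : Fin 0 → ZMod m) : leeDecomp m 0 x = 0 := by
  simp [leeDecomp]

lemma master (m : ℕ) (hm : 4 ≤ m) (heven : Even m) :
    ∀ (n : ℕ) (M : Multiset ℕ), (∀ p ∈ M, 1 ≤ p ∧ p ≤ m / 2) →
    Nat.card {x : Fin n → ZMod m // leeDecomp m n x = M} =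
      2 ^ (Multiset.card M - M.count (m / 2)) * mnom M * n.choose (Multiset.card M) := by
  haveI : NeZero m := ⟨by omega⟩
  intro n
  induction n with
  | zero =>
    intro M hM
    by_cases hM0 : M = 0
    · subst hM0
      haveI : Unique {x : Fin 0 → ZMod m // leeDecomp m 0 x = (0 : Multiset ℕ)} :=
        ⟨⟨⟨fun i => i.elim0, leeDecomp_zero m _⟩⟩, fun y => Subtype.ext (funext fun i => i.elim0)⟩
      rw [Nat.card_unique]
      simp [mnom, Finsupp.multinomial_eq, Nat.multinomial]
    · haveI : IsEmpty {x : Fin 0 → ZMod m // leeDecomp m 0 x = M} :=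
        ⟨fun x => hM0 (by rw [← x.2, leeDecomp_zero])⟩
      rw [Nat.card_of_isEmpty]
      have hpos : 0 < Multiset.card M := Multiset.card_pos.2 hM0
      rw [Nat.choose_eq_zero_of_lt hpos, mul_zero]
  | succ n ih =>
    intro M hM
    classical
    have e1 : {x : Fin (n+1) → ZMod m // leeDecomp m (n+1) x = M} ≃
        Σ a : ZMod m, {y : Fin n → ZMod m //
          (if a = 0 then leeDecomp m n y else leeWt m a ::ₘ leeDecomp m n y) = M} :=
      ((Fin.consEquiv fun _ : Fin (n+1) => ZMod m).symm.subtypeEquiv fun x => by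
        rw [leeDecomp_succ]; exact Iff.rfl).trans
        (Equiv.subtypeProdEquivSigmaSubtype fun a y =>
          (if a = 0 then leeDecomp m n y else leeWt m a ::ₘ leeDecomp m n y) = M)
    rw [Nat.card_congr e1, Nat.card_eq_fintype_card, Fintype.card_sigma]
    simp only [← Nat.card_eq_fintype_card]
    rw [← Finset.add_sum_erase Finset.univ _ (Finset.mem_univ (0 : ZMod m))]
    have h0 : Nat.card {y : Fin n → ZMod m //
        (if (0 : ZMod m) = 0 then leeDecomp m n y else leeWt m 0 ::ₘ leeDecomp m n y) = M}
        = 2 ^ (Multiset.card M - M.count (m / 2)) * mnom M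
            * n.choose (Multiset.card M) := by
      rw [Nat.card_congr (Equiv.subtypeEquivRight fun y => by rw [if_pos rfl])]
      exact ih M hM
    set g : ℕ → ℕ := fun w =>
      if w ∈ M then 2 ^ (Multiset.card (M.erase w) - (M.erase w).count (m / 2)) *
        mnom (M.erase w) * n.choose (Multiset.card (M.erase w)) else 0 with hg
    have hfa : ∀ a : ZMod m, a ≠ 0 → Nat.card {y : Fin n → ZMod m //
        (if a = 0 then leeDecomp m n y else leeWt m a ::ₘ leeDecomp m n y) = M}
        = g (leeWt m a) := by
      intro a ha
      rw [Nat.card_congr (Equiv.subtypeEquivRight fun y => by rw [if_neg ha])]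
      by_cases hmem : leeWt m a ∈ M
      · have hiff : ∀ y : Fin n → ZMod m,
            leeWt m a ::ₘ leeDecomp m n y = M ↔ leeDecomp m n y = M.erase (leeWt m a) := by
          intro y
          constructor
          · intro h
            rw [← Multiset.cons_erase hmem] at h
            exact (Multiset.cons_inj_right _).1 h
          · intro h; rw [h, Multiset.cons_erase hmem]
        rw [Nat.card_congr (Equiv.subtypeEquivRight hiff),
          ih (M.erase (leeWt m a)) (fun p hp => hM p (Multiset.mem_of_mem_erase hp)), hg]
        simp only [if_pos hmem]
      · haveI : IsEmpty {y : Fin n → ZMod m // leeWt m a ::ₘ leeDecomp m n y = M} :=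
          ⟨fun y => hmem (y.2 ▸ Multiset.mem_cons_self _ _)⟩
        rw [Nat.card_of_isEmpty, hg]
        simp [hmem]
    rw [h0, Finset.sum_congr rfl fun a ha => hfa a (Finset.ne_of_mem_erase ha)]
    have hmaps : ∀ a ∈ Finset.univ.erase (0 : ZMod m), leeWt m a ∈ Finset.range (m + 1) := by
      intro a _
      rw [Finset.mem_range]
      calc leeWt m a ≤ m - a.val := min_le_right _ _
        _ < m + 1 := by omega
    have hfib : ∑ a ∈ Finset.univ.erase (0 : ZMod m), g (leeWt m a)
        = ∑ j ∈ Finset.range (m + 1),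
            ((Finset.univ.erase (0 : ZMod m)).filter fun a => leeWt m a = j).card * g j := by
      rw [← Finset.sum_fiberwise_of_maps_to' hmaps g]
      exact Finset.sum_congr rfl fun j _ => by rw [Finset.sum_const, smul_eq_mul]
    rw [hfib]
    have hsub : M.toFinset ⊆ Finset.range (m + 1) := by
      intro j hj
      have := (hM j (Multiset.mem_toFinset.1 hj)).2
      rw [Finset.mem_range]; omega
    have hzero : ∀ j ∈ Finset.range (m + 1), j ∉ M.toFinset →
        ((Finset.univ.erase (0 : ZMod m)).filter fun a => leeWt m a = j).card * g j = 0 := by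
      intro j _ hj
      have : g j = 0 := by
        rw [hg]; exact if_neg fun h => hj (Multiset.mem_toFinset.2 h)
      rw [this, mul_zero]
    rw [← Finset.sum_subset hsub hzero]
    have hterm : ∀ j ∈ M.toFinset,
        ((Finset.univ.erase (0 : ZMod m)).filter fun a => leeWt m a = j).card * g j
        = 2 ^ (Multiset.card M - M.count (m / 2)) * mnom (M.erase j)
            * n.choose (Multiset.card M - 1) := by
      intro j hj
      have hjM : j ∈ M := Multiset.mem_toFinset.1 hj
      obtain ⟨hj1, hj2⟩ := hM j hjM
      have hfilter : ((Finset.univ.erase (0 : ZMod m)).filter fun a => leeWt m a = j)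
          = Finset.univ.filter fun a : ZMod m => a ≠ 0 ∧ leeWt m a = j := by
        ext a; simp [Finset.mem_erase, and_comm]
      rw [hfilter, card_fiber m j heven hj1 hj2, hg]
      simp only [if_pos hjM]
      have hcard : Multiset.card (M.erase j) = Multiset.card M - 1 :=
        Multiset.card_erase_of_mem hjM
      have hcle : M.count (m / 2) ≤ Multiset.card M := Multiset.count_le_card _ _
      have hkpos : 1 ≤ Multiset.card M :=
        Multiset.card_pos.2 (by rintro rfl; simp at hjM)
      by_cases hjr : j = m / 2
      · subst hjr
        have hc1 : 1 ≤ M.count (m / 2) := Multiset.count_pos.2 hjM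
        rw [if_pos rfl, Multiset.count_erase_self, hcard, one_mul]
        have hexp : Multiset.card M - 1 - (M.count (m / 2) - 1)
            = Multiset.card M - M.count (m / 2) := by omega
        rw [hexp]
      · rw [if_neg hjr, Multiset.count_erase_of_ne fun h => hjr h.symm, hcard]
        have hcle' : M.count (m / 2) ≤ Multiset.card M - 1 := by
          have h1 := Multiset.count_le_card (m / 2) (M.erase j)
          rw [Multiset.count_erase_of_ne fun h => hjr h.symm, hcard] at h1
          exact h1
        have hexp : Multiset.card M - M.count (m / 2)
            = (Multiset.card M - 1 - M.count (m / 2)) + 1 := by omega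
        rw [hexp, pow_succ]
        ring
    rw [Finset.sum_congr rfl hterm]
    by_cases hM0 : M = 0
    · subst hM0
      simp [mnom, Finsupp.multinomial_eq, Nat.multinomial]
    · have hfact : ∑ j ∈ M.toFinset,
          2 ^ (Multiset.card M - M.count (m / 2)) * mnom (M.erase j)
            * n.choose (Multiset.card M - 1)
          = 2 ^ (Multiset.card M - M.count (m / 2)) * mnom M
            * n.choose (Multiset.card M - 1) := by
        rw [← Finset.sum_mul, ← Finset.mul_sum, sum_erase_mult M hM0]
      rw [hfact]
      have hkpos : 1 ≤ Multiset.card M := Multiset.card_pos.2 hM0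
      have hpascal : (n + 1).choose (Multiset.card M)
          = n.choose (Multiset.card M) + n.choose (Multiset.card M - 1) := by
        obtain ⟨k', hk'⟩ : ∃ k', Multiset.card M = k' + 1 :=
          ⟨Multiset.card M - 1, by omega⟩
        rw [hk']
        simp [Nat.choose_succ_succ', Nat.add_comm]
      rw [hpascal]
      ring

end aux

theorem card_weight_decomposition_even (m t n : ℕ) (hm : 4 ≤ m) (heven : Even m)
    (ht : 1 ≤ t) (l : List ℕ) (hsort : l.Pairwise (· ≥ ·))
    (hparts : ∀ p ∈ l, 1 ≤ p ∧ p ≤ m / 2) (hsum : l.sum = t)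
    (hn : l.length ≤ n) :
    Nat.card {x : Fin n → ZMod m // leeDecomp m n x = (l : Multiset ℕ)} =
      2 ^ (l.length - l.count (m / 2)) *
        (l.length.factorial / ∏ i ∈ Finset.range (t + 1), (l.count i).factorial) *
        n.choose l.length := by
  classical
  have hM : ∀ p ∈ (l : Multiset ℕ), 1 ≤ p ∧ p ≤ m / 2 := fun p hp =>
    hparts p (Multiset.mem_coe.1 hp)
  rw [master m hm heven n (l : Multiset ℕ) hM]
  have hcard : Multiset.card (l : Multiset ℕ) = l.length := Multiset.coe_card l
  have hcount : ∀ i, Multiset.count i (l : Multiset ℕ) = l.count i := fun i =>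
    Multiset.coe_count i l
  have hmn : mnom (l : Multiset ℕ)
      = l.length.factorial / ∏ i ∈ Finset.range (t + 1), (l.count i).factorial := by
    rw [mult_eq, Nat.multinomial]
    congr 1
    · rw [Multiset.toFinset_sum_count_eq, hcard]
    · have hsub2 : (l : Multiset ℕ).toFinset ⊆ Finset.range (t + 1) := by
        intro i hi
        have hi' : i ∈ l := Multiset.mem_coe.1 (Multiset.mem_toFinset.1 hi)
        have : i ≤ l.sum := List.single_le_sum (fun x _ => Nat.zero_le x) i hi'
        rw [Finset.mem_range]; omega
      calc ∏ i ∈ (l : Multiset ℕ).toFinset, (Multiset.count i (l : Multiset ℕ)).factorial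
          = ∏ i ∈ Finset.range (t + 1), (Multiset.count i (l : Multiset ℕ)).factorial := by
            refine Finset.prod_subset hsub2 fun i _ hi => ?_
            rw [Multiset.count_eq_zero.2 fun h => hi (Multiset.mem_toFinset.2 h)]; rfl
        _ = ∏ i ∈ Finset.range (t + 1), (l.count i).factorial :=
            Finset.prod_congr rfl fun i _ => by rw [hcount]
  rw [hcard, hcount, hmn]
end

section
/- The number of vectors in Z_m^n of Lee weight exactly t equals Σ_λ N(λ), where the sum runs over partitions λ of t with parts at most ⌊m/2⌋ and length ℓ_λ ≤ n, and N(λ) = 2^{ℓ_λ - c_λ}·|Π_λ|·C(n, ℓ_λ) with c_λ the number of parts equal to m/2 if m is even and c_λ = 0 if m is odd. -/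
/-- Lee weight of a vector over `ZMod m`. -/
def leeWtVec (m n : ℕ) (x : Fin n → ZMod m) : ℕ := ∑ i, leeWt m (x i)

open Finset

section Aux

lemma multiset_map_univ {α : Type*} (n : ℕ) (f : Fin n → α) :
    Finset.univ.val.map f = (List.ofFn f : Multiset α) := by
  rw [List.ofFn_eq_map, Fin.univ_def]; rfl

lemma card_fiber_eq_count {α ι : Type*} [Fintype α] [DecidableEq ι] (u : α → ι) (i : ι) :
    Fintype.card {a // u a = i} = Multiset.count i (Finset.univ.val.map u) := by
  classical
  rw [Multiset.count_map, Fintype.card_subtype, Finset.card, Finset.filter_val]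
  congr 1
  apply Multiset.filter_congr
  intro x _
  exact ⟨Eq.symm, Eq.symm⟩

/-- Two functions with the same value multiset differ by a permutation. -/
lemma exists_perm_comp {α ι : Type*} [Fintype α] [DecidableEq α] [DecidableEq ι]
    (f g : α → ι) (h : Finset.univ.val.map g = Finset.univ.val.map f) :
    ∃ σ : Equiv.Perm α, f ∘ σ = g := by
  have hcard : ∀ i : ι, Fintype.card {a // g a = i} = Fintype.card {a // f a = i} := by
    intro i
    rw [card_fiber_eq_count, card_fiber_eq_count, h]
  let e : ∀ i, {a // g a = i} ≃ {a // f a = i} := fun i => Fintype.equivOfCardEq (hcard i)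
  refine ⟨(Equiv.sigmaFiberEquiv g).symm.trans ((Equiv.sigmaCongrRight e).trans
    (Equiv.sigmaFiberEquiv f)), ?_⟩
  funext a
  simp only [Function.comp_apply, Equiv.trans_apply,
    Equiv.sigmaFiberEquiv, Equiv.sigmaCongrRight, Equiv.coe_fn_mk, Equiv.coe_fn_symm_mk]
  exact (e (g a) ⟨a, rfl⟩).2

/-- Orbit-stabilizer counting: number of functions with the same value multiset as `f`. -/
lemma card_same_multiset {α ι : Type*} [Fintype α] [DecidableEq α] [Fintype ι] [DecidableEq ι]
    (f : α → ι) :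
    Fintype.card {g : α → ι // Finset.univ.val.map g = Finset.univ.val.map f} *
      ∏ i : ι, (Fintype.card {a // f a = i}).factorial = (Fintype.card α).factorial := by
  classical
  letI : Fintype (Equiv.Perm α)ᵈᵐᵃ := Fintype.ofEquiv _ DomMulAct.mk
  letI : Fintype ↥(MulAction.stabilizer (Equiv.Perm α)ᵈᵐᵃ f) := Fintype.ofFinite _
  letI : Fintype ↑(MulAction.orbit (Equiv.Perm α)ᵈᵐᵃ f) := Fintype.ofFinite _
  have horb : MulAction.orbit (Equiv.Perm α)ᵈᵐᵃ f =
      {g : α → ι | Finset.univ.val.map g = Finset.univ.val.map f} := by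
    ext g
    constructor
    · rintro ⟨σ, rfl⟩
      show Finset.univ.val.map (f ∘ (DomMulAct.mk.symm σ : Equiv.Perm α)) = _
      rw [← Multiset.map_map]
      congr 1
      conv_rhs => rw [← Finset.map_univ_equiv (DomMulAct.mk.symm σ), Finset.map_val]
      rfl
    · intro hg
      obtain ⟨σ, hσ⟩ := exists_perm_comp f g hg
      exact ⟨DomMulAct.mk σ, hσ⟩
  have key := MulAction.card_orbit_mul_card_stabilizer_eq_card_group (Equiv.Perm α)ᵈᵐᵃ f
  rw [show Fintype.card ↑(MulAction.orbit (Equiv.Perm α)ᵈᵐᵃ f) =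
      Fintype.card {g : α → ι // Finset.univ.val.map g = Finset.univ.val.map f} from ?_,
    show Fintype.card ↥(MulAction.stabilizer (Equiv.Perm α)ᵈᵐᵃ f) =
      ∏ i : ι, (Fintype.card {a // f a = i}).factorial from ?_] at key
  · rw [key]
    rw [show Fintype.card (Equiv.Perm α)ᵈᵐᵃ = Fintype.card (Equiv.Perm α) from
      Fintype.card_congr DomMulAct.mk.symm, Fintype.card_perm]
  · rw [← DomMulAct.stabilizer_card f]
    exact Fintype.card_congr (Equiv.subtypeEquiv DomMulAct.mk.symm
      (fun _ => DomMulAct.mem_stabilizer_iff))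
  · apply Fintype.card_congr
    apply Equiv.subtypeEquiv (Equiv.refl _)
    intro g
    rw [horb]
    rfl

/-- Counting functions `Fin n → Fin (h+1)` with prescribed value multiset. -/
lemma card_w (n h : ℕ) (M0 : Multiset ℕ) (hcard : Multiset.card M0 = n)
    (hle : ∀ j ∈ M0, j ≤ h) :
    (univ.filter fun w : Fin n → Fin (h+1) =>
        univ.val.map (fun i => (w i).val) = M0).card *
      ∏ v : Fin (h+1), (M0.count v.val).factorial = n.factorial := by
  classical
  have hlen : M0.toList.length = n := by rw [Multiset.length_toList, hcard]
  set w0 : Fin n → Fin (h+1) := fun i =>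
    ⟨M0.toList.get (Fin.cast hlen.symm i), by
      have : M0.toList.get (Fin.cast hlen.symm i) ∈ M0 := by
        rw [← Multiset.mem_toList]
        apply List.get_mem
      exact Nat.lt_succ_of_le (hle _ this)⟩ with hw0
  have hkey : univ.val.map (fun i => (w0 i).val) = M0 := by
    rw [multiset_map_univ]
    rw [show (List.ofFn fun i => (w0 i).val) = List.ofFn (M0.toList.get) from
      (List.ofFn_congr hlen _).symm, List.ofFn_get, Multiset.coe_toList]
  have hmapval : ∀ w : Fin n → Fin (h+1),
      univ.val.map (fun i => (w i).val) = (univ.val.map w).map Fin.val := by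
    intro w; rw [Multiset.map_map]; rfl
  have hiff : ∀ w : Fin n → Fin (h+1),
      (univ.val.map (fun i => (w i).val) = M0) ↔ univ.val.map w = univ.val.map w0 := by
    intro w
    rw [← hkey, hmapval, hmapval]
    constructor
    · exact fun hh => Multiset.map_injective Fin.val_injective hh
    · exact fun hh => by rw [hh]
  have hfilt : (univ.filter fun w : Fin n → Fin (h+1) =>
      univ.val.map (fun i => (w i).val) = M0).card =
      Fintype.card {w : Fin n → Fin (h+1) // univ.val.map w = univ.val.map w0} := by
    rw [Fintype.card_subtype]
    congr 1
    apply filter_congr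
    intro w _
    simp only [hiff w, eq_iff_iff]
  rw [hfilt]
  have hcnt : ∀ v : Fin (h+1), Fintype.card {i // w0 i = v} = M0.count v.val := by
    intro v
    rw [card_fiber_eq_count, ← Multiset.count_map_eq_count' Fin.val _ Fin.val_injective v,
      ← hmapval, hkey]
  calc Fintype.card {w : Fin n → Fin (h+1) // univ.val.map w = univ.val.map w0} *
        ∏ v : Fin (h+1), (M0.count v.val).factorial
      = Fintype.card {w : Fin n → Fin (h+1) // univ.val.map w = univ.val.map w0} *
        ∏ v : Fin (h+1), (Fintype.card {i // w0 i = v}).factorial := by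
        congr 1
        exact Finset.prod_congr rfl fun v _ => by rw [hcnt v]
    _ = (Fintype.card (Fin n)).factorial := card_same_multiset w0
    _ = n.factorial := by rw [Fintype.card_fin]

lemma leeWt_le_half (m : ℕ) [NeZero m] (a : ZMod m) : leeWt m a ≤ m / 2 := by
  have h := ZMod.val_lt a
  unfold leeWt
  omega

lemma leeWt_eq_zero_iff (m : ℕ) [NeZero m] (a : ZMod m) : leeWt m a = 0 ↔ a = 0 := by
  have h := ZMod.val_lt a
  unfold leeWt
  constructor
  · intro hw
    have : a.val = 0 := by omega
    exact (ZMod.val_eq_zero a).mp this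
  · rintro rfl
    rw [ZMod.val_zero]
    omega

lemma cnt_zero (m : ℕ) [NeZero m] :
    (univ.filter fun a : ZMod m => leeWt m a = 0).card = 1 := by
  rw [show (univ.filter fun a : ZMod m => leeWt m a = 0) = {0} from ?_, card_singleton]
  ext a
  simp [leeWt_eq_zero_iff]

lemma cnt_pos' (m j : ℕ) [NeZero m] (hj : 1 ≤ j) (hjm : j ≤ m / 2) :
    (univ.filter fun a : ZMod m => leeWt m a = j).card = if 2 * j = m then 1 else 2 := by
  have hm : 0 < m := Nat.pos_of_ne_zero (NeZero.ne m)
  have hjm' : 2 * j ≤ m := by omega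
  have hjltm : j < m := by omega
  have hvj : ((j : ZMod m)).val = j := ZMod.val_cast_of_lt hjltm
  have hjne : (j : ZMod m) ≠ 0 := by
    intro h
    rw [h, ZMod.val_zero] at hvj
    omega
  have hvnj : ((-(j : ZMod m))).val = m - j := by
    rw [ZMod.neg_val, if_neg hjne, hvj]
  have hset : (univ.filter fun a : ZMod m => leeWt m a = j) = {(j : ZMod m), -(j : ZMod m)} := by
    ext a
    have hva := ZMod.val_lt a
    simp only [mem_filter, mem_univ, true_and, mem_insert, mem_singleton]
    constructor
    · intro h
      unfold leeWt at h
      have : a.val = j ∨ a.val = m - j := by omega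
      rcases this with h1 | h1
      · left
        rw [← hvj] at h1
        exact ZMod.val_injective m h1
      · right
        rw [← hvnj] at h1
        exact ZMod.val_injective m h1
    · rintro (rfl | rfl) <;> unfold leeWt
      · rw [hvj]; omega
      · rw [hvnj]; omega
  rw [hset]
  by_cases h2 : 2 * j = m
  · rw [if_pos h2]
    have : -(j : ZMod m) = j := by
      have : ((j : ZMod m)).val = (-(j : ZMod m)).val := by omega
      exact (ZMod.val_injective m this).symm
    rw [this, insert_eq_self.mpr (mem_singleton_self _), card_singleton]
  · rw [if_neg h2, card_insert_of_notMem, card_singleton]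
    rw [mem_singleton]
    intro h
    have := congrArg ZMod.val h
    omega

lemma prod_cnt (m : ℕ) [NeZero m] (M : Multiset ℕ)
    (hpos : ∀ j ∈ M, 0 < j) (hle : ∀ j ∈ M, j ≤ m / 2) :
    (M.map fun j => (univ.filter fun a : ZMod m => leeWt m a = j).card).prod
      = 2 ^ (Multiset.card M - if Even m then M.count (m / 2) else 0) := by
  classical
  set cnt : ℕ → ℕ := fun j => (univ.filter fun a : ZMod m => leeWt m a = j).card with hcnt
  have hsplit := Multiset.filter_add_not (fun j => 2 * j = m) M
  set Mh := M.filter (fun j => 2 * j = m) with hMh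
  set Mr := M.filter (fun j => ¬ 2 * j = m) with hMr
  have hprodh : (Mh.map cnt).prod = 1 := by
    apply Multiset.prod_eq_one
    intro x hx
    obtain ⟨j, hj, rfl⟩ := Multiset.mem_map.mp hx
    obtain ⟨hjM, hj2⟩ := Multiset.mem_filter.mp hj
    rw [hcnt]
    simp only
    rw [cnt_pos' m j (hpos j hjM) (hle j hjM), if_pos hj2]
  have hprodr : (Mr.map cnt).prod = 2 ^ Multiset.card Mr := by
    have : Mr.map cnt = Multiset.replicate (Multiset.card Mr) 2 := by
      rw [Multiset.eq_replicate]
      constructor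
      · rw [Multiset.card_map]
      · intro b hb
        obtain ⟨j, hj, rfl⟩ := Multiset.mem_map.mp hb
        obtain ⟨hjM, hj2⟩ := Multiset.mem_filter.mp hj
        rw [hcnt]
        simp only
        rw [cnt_pos' m j (hpos j hjM) (hle j hjM), if_neg hj2]
    rw [this, Multiset.prod_replicate]
  have hcardh : Multiset.card Mh = if Even m then M.count (m / 2) else 0 := by
    by_cases hev : Even m
    · rw [if_pos hev]
      have : Mh = M.filter (fun j => m / 2 = j) := by
        rw [hMh]
        apply Multiset.filter_congr
        intro j _
        obtain ⟨k, hk⟩ := hev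
        constructor <;> intro h <;> omega
      rw [this, ← Multiset.countP_eq_card_filter]
      rfl
    · rw [if_neg hev]
      rw [hMh, Multiset.card_eq_zero, Multiset.filter_eq_nil]
      intro j _
      intro h2
      exact hev ⟨j, by omega⟩
  have hcards : Multiset.card Mh + Multiset.card Mr = Multiset.card M := by
    rw [← Multiset.card_add, hsplit]
  calc (M.map cnt).prod = ((Mh + Mr).map cnt).prod := by rw [hsplit]
    _ = (Mh.map cnt).prod * (Mr.map cnt).prod := by rw [Multiset.map_add, Multiset.prod_add]
    _ = 2 ^ Multiset.card Mr := by rw [hprodh, hprodr, one_mul]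
    _ = 2 ^ (Multiset.card M - if Even m then M.count (m / 2) else 0) := by
        rw [← hcardh]; congr 1; omega

/-- The main fiber count for a fixed weight multiset `M`. -/
lemma fiber_card (m n : ℕ) [NeZero m] (M : Multiset ℕ)
    (hpos : ∀ j ∈ M, 0 < j) (hle : ∀ j ∈ M, j ≤ m / 2) (hcard : Multiset.card M ≤ n) :
    (univ.filter fun x : Fin n → ZMod m =>
        (univ.val.map fun i => leeWt m (x i)).filter (fun j => j ≠ 0) = M).card *
      ((n - Multiset.card M).factorial * ∏ j ∈ M.toFinset, (M.count j).factorial)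
      = 2 ^ (Multiset.card M - if Even m then M.count (m / 2) else 0) * n.factorial := by
  classical
  set h := m / 2 with hh
  set ℓ := Multiset.card M with hℓ
  set M0 : Multiset ℕ := M + Multiset.replicate (n - ℓ) 0 with hM0
  have hM0card : Multiset.card M0 = n := by
    rw [hM0, Multiset.card_add, Multiset.card_replicate, ← hℓ]
    omega
  have hM0le : ∀ j ∈ M0, j ≤ h := by
    intro j hj
    rw [hM0, Multiset.mem_add] at hj
    rcases hj with hj | hj
    · exact hle j hj
    · rw [Multiset.eq_of_mem_replicate hj]
      exact Nat.zero_le _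
  -- the fiber condition is equivalent to the full weight multiset being M0
  have hC1 : ∀ x : Fin n → ZMod m,
      ((univ.val.map fun i => leeWt m (x i)).filter (fun j => j ≠ 0) = M) ↔
      (univ.val.map fun i => leeWt m (x i)) = M0 := by
    intro x
    set s := univ.val.map fun i => leeWt m (x i) with hs
    have hscard : Multiset.card s = n := by
      rw [hs, Multiset.card_map]
      exact Finset.card_univ.trans (Fintype.card_fin n)
    constructor
    · intro hnz
      have hsplit := (Multiset.filter_add_not (fun j => j ≠ 0) s).symm
      have hzero : s.filter (fun j => ¬ j ≠ 0) =
          Multiset.replicate (n - ℓ) 0 := by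
        rw [Multiset.eq_replicate]
        constructor
        · have := congrArg Multiset.card (Multiset.filter_add_not (fun j => j ≠ 0) s)
          rw [Multiset.card_add, hnz, hscard, ← hℓ] at this
          omega
        · intro b hb
          have := (Multiset.mem_filter.mp hb).2
          simpa using this
      rw [hsplit, hnz, hzero, hM0]
    · intro hmap
      rw [hmap, hM0, Multiset.filter_add]
      have h1 : M.filter (fun j => j ≠ 0) = M :=
        Multiset.filter_eq_self.mpr (fun j hj => (hpos j hj).ne')
      have h2 : (Multiset.replicate (n - ℓ) 0).filter (fun j : ℕ => j ≠ 0) = 0 := by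
        rw [Multiset.filter_eq_nil]
        intro j hj
        rw [Multiset.eq_of_mem_replicate hj]
        simp
      rw [h1, h2, add_zero]
  set cnt : ℕ → ℕ := fun j => (univ.filter fun a : ZMod m => leeWt m a = j).card with hcnt
  set ψ : (Fin n → ZMod m) → (Fin n → Fin (h+1)) := fun x i =>
    ⟨leeWt m (x i), Nat.lt_succ_of_le (leeWt_le_half m (x i))⟩ with hψ
  set W : Finset (Fin n → Fin (h+1)) :=
    univ.filter (fun w => univ.val.map (fun i => (w i).val) = M0) with hW
  have hψmap : ∀ x, (univ.val.map fun i => (ψ x i).val) =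
      (univ.val.map fun i => leeWt m (x i)) := fun x => rfl
  set s : Finset (Fin n → ZMod m) := univ.filter (fun x =>
    (univ.val.map fun i => leeWt m (x i)).filter (fun j => j ≠ 0) = M) with hsdef
  have hs2 : s = univ.filter (fun x => (univ.val.map fun i => leeWt m (x i)) = M0) := by
    apply filter_congr
    intro x _
    exact hC1 x
  have hmaps : ∀ x ∈ s, ψ x ∈ W := by
    intro x hx
    rw [hs2, mem_filter] at hx
    rw [hW, mem_filter]
    exact ⟨mem_univ _, by rw [hψmap]; exact hx.2⟩
  have hstep := Finset.card_eq_sum_card_fiberwise hmaps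
  have hfib : ∀ w ∈ W, (s.filter fun x => ψ x = w).card = (M0.map cnt).prod := by
    intro w hw
    have hwM : univ.val.map (fun i => (w i).val) = M0 := (mem_filter.mp hw).2
    have hfe : (s.filter fun x => ψ x = w) =
        Fintype.piFinset (fun i => univ.filter fun a : ZMod m => leeWt m a = (w i).val) := by
      ext x
      rw [mem_filter, Fintype.mem_piFinset]
      simp only [mem_filter, mem_univ, true_and]
      constructor
      · rintro ⟨_, rfl⟩ i
        rfl
      · intro hx
        have hxw : ψ x = w := funext fun i => Fin.ext (by rw [← hx i])
        refine ⟨?_, hxw⟩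
        rw [hs2, mem_filter]
        refine ⟨mem_univ _, ?_⟩
        rw [← hψmap, hxw, hwM]
    rw [hfe, Fintype.card_piFinset]
    rw [show (∏ i : Fin n, ((univ.filter fun a : ZMod m => leeWt m a = (w i).val)).card)
        = ∏ i : Fin n, cnt ((w i).val) from rfl]
    rw [Finset.prod_eq_multiset_prod]
    rw [show (univ.val.map fun i : Fin n => cnt ((w i).val))
        = (univ.val.map fun i : Fin n => (w i).val).map cnt from by
      rw [Multiset.map_map]; rfl]
    rw [hwM]
  have hK : (M0.map cnt).prod =
      2 ^ (ℓ - if Even m then M.count (m / 2) else 0) := by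
    rw [hM0, Multiset.map_add, Multiset.prod_add, Multiset.map_replicate,
      Multiset.prod_replicate]
    rw [show (M.map cnt).prod = 2 ^ (Multiset.card M - if Even m then M.count (m / 2) else 0)
      from prod_cnt m M hpos hle]
    rw [show cnt 0 = 1 from cnt_zero m, one_pow, mul_one, hℓ]
  have hscard : s.card = W.card * (2 ^ (ℓ - if Even m then M.count (m / 2) else 0)) := by
    rw [hstep, Finset.sum_congr rfl hfib, Finset.sum_const, smul_eq_mul, hK]
  have hcw := card_w n h M0 hM0card hM0le
  have hc0 : M0.count 0 = n - ℓ := by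
    rw [hM0, Multiset.count_add, Multiset.count_replicate, if_pos rfl,
      Multiset.count_eq_zero.mpr (fun hmem => (hpos 0 hmem).ne rfl), zero_add]
  have hsub : M.toFinset ⊆ (Finset.range (h+1)).erase 0 := by
    intro j hj
    rw [Multiset.mem_toFinset] at hj
    rw [Finset.mem_erase, Finset.mem_range]
    exact ⟨(hpos j hj).ne', Nat.lt_succ_of_le (hle j hj)⟩
  have hprod : ∏ v : Fin (h+1), (M0.count v.val).factorial
      = (n - ℓ).factorial * ∏ j ∈ M.toFinset, (M.count j).factorial := by
    rw [Fin.prod_univ_eq_prod_range (fun j => (M0.count j).factorial) (h+1)]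
    rw [← Finset.mul_prod_erase _ _ (Finset.mem_range.mpr (Nat.succ_pos h))]
    congr 1
    · rw [hc0]
    · rw [Finset.prod_congr rfl (show ∀ j ∈ (Finset.range (h+1)).erase 0,
          (M0.count j).factorial = (M.count j).factorial from ?_)]
      · exact (Finset.prod_subset hsub (fun j _ hj => by
          rw [Multiset.count_eq_zero.mpr (fun hmem => hj (Multiset.mem_toFinset.mpr hmem))]
          rfl)).symm
      · intro j hj
        have hj0 : j ≠ 0 := (Finset.mem_erase.mp hj).1
        rw [hM0, Multiset.count_add, Multiset.count_replicate, if_neg (Ne.symm hj0), add_zero]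
  have hWn : W.card * ((n - ℓ).factorial * ∏ j ∈ M.toFinset, (M.count j).factorial)
      = n.factorial := by
    rw [← hprod]
    exact hcw
  rw [hscard, ← hWn]
  ring

end Aux

open Classical in
theorem card_constant_lee_weight_sphere (m n t : ℕ) (hm : 2 ≤ m) (hn : 1 ≤ n) :
    Nat.card {x : Fin n → ZMod m // leeWtVec m n x = t} =
      ∑ p : Nat.Partition t,
        if (∀ i ∈ p.parts, i ≤ m / 2) ∧ Multiset.card p.parts ≤ n then
          2 ^ (Multiset.card p.parts - if Even m then p.parts.count (m / 2) else 0) *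
            ((Multiset.card p.parts).factorial /
              ∏ i ∈ Finset.range (t + 1), (p.parts.count i).factorial) *
            n.choose (Multiset.card p.parts)
        else 0 := by
  classical
  haveI : NeZero m := ⟨by omega⟩
  set nz : (Fin n → ZMod m) → Multiset ℕ := fun x =>
    (univ.val.map fun i => leeWt m (x i)).filter (fun j => j ≠ 0) with hnz
  have hsum_nz : ∀ x, (nz x).sum = leeWtVec m n x := by
    intro x
    have hadd := Multiset.sum_filter_add_sum_filter_not
      (s := univ.val.map fun i => leeWt m (x i)) (fun j => j ≠ 0)
    have hz : ((univ.val.map fun i => leeWt m (x i)).filter (fun j => ¬ j ≠ 0)).sum = 0 := by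
      apply Multiset.sum_eq_zero
      intro j hj
      have := (Multiset.mem_filter.mp hj).2
      simpa using this
    have hv : (univ.val.map fun i => leeWt m (x i)).sum = leeWtVec m n x := by
      rw [leeWtVec, Finset.sum_eq_multiset_sum]
    show ((univ.val.map fun i => leeWt m (x i)).filter (fun j => j ≠ 0)).sum = leeWtVec m n x
    rw [← hv, ← hadd, hz, add_zero]
  have hpos_nz : ∀ x, ∀ j ∈ nz x, 0 < j := fun x j hj =>
    Nat.pos_of_ne_zero (Multiset.mem_filter.mp hj).2
  have hle_nz : ∀ x, ∀ j ∈ nz x, j ≤ m / 2 := by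
    intro x j hj
    obtain ⟨i, _, rfl⟩ := Multiset.mem_map.mp (Multiset.mem_of_mem_filter hj)
    exact leeWt_le_half m (x i)
  have hcard_nz : ∀ x, Multiset.card (nz x) ≤ n := by
    intro x
    calc Multiset.card (nz x) ≤ Multiset.card (univ.val.map fun i => leeWt m (x i)) :=
        Multiset.card_le_card (Multiset.filter_le _ _)
      _ = n := by rw [Multiset.card_map]; exact Finset.card_univ.trans (Fintype.card_fin n)
  set φ : (Fin n → ZMod m) → Nat.Partition t := fun x =>
    if hx : leeWtVec m n x = t then
      ⟨nz x, fun hj => hpos_nz x _ hj, by rw [hsum_nz x, hx]⟩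
    else Nat.Partition.indiscrete t with hφ
  rw [Nat.card_eq_fintype_card, Fintype.card_subtype]
  rw [Finset.card_eq_sum_card_fiberwise (f := φ) (t := univ) (fun x _ => mem_univ _)]
  apply Finset.sum_congr rfl
  intro p _
  have hfe : ((univ.filter fun x => leeWtVec m n x = t).filter fun x => φ x = p)
      = univ.filter (fun x => nz x = p.parts) := by
    ext x
    simp only [mem_filter, mem_univ, true_and]
    constructor
    · rintro ⟨hx, hphi⟩
      rw [hφ] at hphi
      simp only at hphi
      rw [dif_pos hx] at hphi
      exact congrArg Nat.Partition.parts hphi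
    · intro hx
      have hwt : leeWtVec m n x = t := by rw [← hsum_nz x, hx]; exact p.parts_sum
      refine ⟨hwt, ?_⟩
      rw [hφ]
      simp only
      rw [dif_pos hwt]
      apply Nat.Partition.ext
      exact hx
  rw [hfe]
  by_cases hcond : (∀ i ∈ p.parts, i ≤ m / 2) ∧ Multiset.card p.parts ≤ n
  · rw [if_pos hcond]
    obtain ⟨hle, hlen⟩ := hcond
    have hfc := fiber_card m n p.parts (fun j hj => p.parts_pos hj) hle hlen
    set ℓ := Multiset.card p.parts with hℓ
    set Ptf := ∏ j ∈ p.parts.toFinset, (p.parts.count j).factorial with hPtf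
    have hsubt : p.parts.toFinset ⊆ Finset.range (t+1) := by
      intro j hj
      rw [Multiset.mem_toFinset] at hj
      rw [Finset.mem_range, Nat.lt_succ_iff]
      calc j ≤ p.parts.sum := Multiset.le_sum_of_mem hj
        _ = t := p.parts_sum
    have hPr : ∏ i ∈ Finset.range (t+1), (p.parts.count i).factorial = Ptf :=
      (Finset.prod_subset hsubt (fun j _ hj => by
        rw [Multiset.count_eq_zero.mpr (fun hmem => hj (Multiset.mem_toFinset.mpr hmem))]
        rfl)).symm
    have hdvd : Ptf ∣ ℓ.factorial := by
      have := Nat.prod_factorial_dvd_factorial_sum p.parts.toFinset (fun j => p.parts.count j)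
      rwa [Multiset.toFinset_sum_count_eq] at this
    have hPtfpos : 0 < Ptf := Finset.prod_pos (fun j _ => Nat.factorial_pos _)
    have hposP : 0 < (n - ℓ).factorial * Ptf := Nat.mul_pos (Nat.factorial_pos _) hPtfpos
    apply Nat.eq_of_mul_eq_mul_right hposP
    rw [hfc, hPr]
    have hchoose := Nat.choose_mul_factorial_mul_factorial hlen
    have hdiv : ℓ.factorial / Ptf * Ptf = ℓ.factorial := Nat.div_mul_cancel hdvd
    have hre : (2 ^ (ℓ - if Even m then p.parts.count (m / 2) else 0) *
          (ℓ.factorial / Ptf) * n.choose ℓ) * ((n - ℓ).factorial * Ptf)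
        = 2 ^ (ℓ - if Even m then p.parts.count (m / 2) else 0) *
          (n.choose ℓ * (ℓ.factorial / Ptf * Ptf) * (n - ℓ).factorial) := by ring
    rw [hre, hdiv]
    rw [show n.choose ℓ * ℓ.factorial * (n - ℓ).factorial = n.factorial from hchoose]
  · rw [if_neg hcond]
    rw [Finset.card_eq_zero, Finset.filter_eq_empty_iff]
    intro x _
    intro hx
    apply hcond
    constructor
    · intro j hj
      rw [← hx] at hj
      exact hle_nz x j hj
    · rw [← hx]
      exact hcard_nz x
end
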